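/- Assume (H1), (H2), (H3), (H4), (H5), (H6), let (2) be an asymptotic system of (1), let x be a solution of (1) with bounded initial condition at some t₀ ≥ 0 that is bounded on ℝ, and let x̂ : ℝ → ℝ^n be a bounded continuous function. Then for each i ∈ {1,…,n}, δ_i(t) → 0 as t → +∞, where δ_i(t) = |b̂_i(t,x̂_i(t)) − b_i(t,x̂_i(t))| + |I_i(t) − Î_i(t)| + Σ_{p=1}^{P} Σ_{j,l=1}^{n} [ ζ_i·( |c_{ijlp}(t) − ĉ_{ijlp}(t)|·|h_{ijlp}(x̂_j(t−τ̂_{ijp}(t)), x̂_l(t−σ̂_{ilp}(t)))| + |c_{ijlp}(t)|·( γ¹_{ijlp}·|x_j(t−τ_{ijp}(t)) − x_j(t−τ̂_{ijp}(t))| + γ²_{ijlp}·|x_l(t−σ_{ilp}(t)) − x_l(t−σ̂_{ilp}(t))| ) ) + ς_i·|d_{ijlp}(t) − d̂_{ijlp}(t)|·|f_{ijlp}(∫_{(−∞,0]} g_{ijp}(x̂_j(t+s)) dη_{ijp}(s), ∫_{(−∞,0]} G_{ilp}(x̂_l(t+s)) dρ_{ilp}(s))| ]. -/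
import Mathlib


open MeasureTheory Filter

/-- The data of the Cohen--Grossberg system (1), with `n+1` neurons and `P+1` delay blocks. -/
structure CGData (n P : ℕ) where
  a : Fin (n+1) → ℝ → ℝ → ℝ
  b : Fin (n+1) → ℝ → ℝ → ℝ
  c : Fin (n+1) → Fin (n+1) → Fin (n+1) → Fin (P+1) → ℝ → ℝ
  d : Fin (n+1) → Fin (n+1) → Fin (n+1) → Fin (P+1) → ℝ → ℝ
  I : Fin (n+1) → ℝ → ℝ
  τ : Fin (n+1) → Fin (n+1) → Fin (P+1) → ℝ → ℝ
  σ : Fin (n+1) → Fin (n+1) → Fin (P+1) → ℝ → ℝ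
  F : Fin (n+1) → ℝ → ℝ → ℝ
  h : Fin (n+1) → Fin (n+1) → Fin (n+1) → Fin (P+1) → ℝ → ℝ → ℝ
  f : Fin (n+1) → Fin (n+1) → Fin (n+1) → Fin (P+1) → ℝ → ℝ → ℝ
  g : Fin (n+1) → Fin (n+1) → Fin (P+1) → ℝ → ℝ
  G : Fin (n+1) → Fin (n+1) → Fin (P+1) → ℝ → ℝ
  η : Fin (n+1) → Fin (n+1) → Fin (P+1) → Measure ℝ
  ρ : Fin (n+1) → Fin (n+1) → Fin (P+1) → Measure ℝ

namespace CGData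

variable {n P : ℕ}

/-- `U_i(t,x)`. -/
noncomputable def U (S : CGData n P) (x : Fin (n+1) → ℝ → ℝ) (i : Fin (n+1)) (t : ℝ) : ℝ :=
  ∑ p : Fin (P+1), ∑ j : Fin (n+1), ∑ l : Fin (n+1),
    S.c i j l p t * S.h i j l p (x j (t - S.τ i j p t)) (x l (t - S.σ i l p t))

/-- `V_i(t,x)`. -/
noncomputable def V (S : CGData n P) (x : Fin (n+1) → ℝ → ℝ) (i : Fin (n+1)) (t : ℝ) : ℝ :=
  ∑ p : Fin (P+1), ∑ j : Fin (n+1), ∑ l : Fin (n+1),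
    S.d i j l p t * S.f i j l p
      (∫ s in Set.Iic (0:ℝ), S.g i j p (x j (t + s)) ∂(S.η i j p))
      (∫ s in Set.Iic (0:ℝ), S.G i l p (x l (t + s)) ∂(S.ρ i l p))

/-- Right-hand side of system (1). -/
noncomputable def rhs (S : CGData n P) (x : Fin (n+1) → ℝ → ℝ) (i : Fin (n+1)) (t : ℝ) : ℝ :=
  S.a i t (x i t) * (-(S.b i t (x i t)) + S.F i (S.U x i t) (S.V x i t) + S.I i t)

/-- Standing regularity assumptions on the data (continuity, positivity of `a`,
nonnegativity of the delays, probability measures supported on `(-∞,0]`). -/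
def Regular (S : CGData n P) : Prop :=
  (∀ i, ContinuousOn (fun q : ℝ × ℝ => S.a i q.1 q.2) (Set.Ici 0 ×ˢ Set.univ)) ∧
  (∀ i, ∀ t ≥ (0:ℝ), ∀ v, 0 < S.a i t v) ∧
  (∀ i, ContinuousOn (fun q : ℝ × ℝ => S.b i q.1 q.2) (Set.Ici 0 ×ˢ Set.univ)) ∧
  (∀ i j l p, ContinuousOn (S.c i j l p) (Set.Ici 0)) ∧
  (∀ i j l p, ContinuousOn (S.d i j l p) (Set.Ici 0)) ∧
  (∀ i, ContinuousOn (S.I i) (Set.Ici 0)) ∧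
  (∀ i j p, ContinuousOn (S.τ i j p) (Set.Ici 0)) ∧
  (∀ i l p, ContinuousOn (S.σ i l p) (Set.Ici 0)) ∧
  (∀ i j p, ∀ t ≥ (0:ℝ), 0 ≤ S.τ i j p t) ∧
  (∀ i l p, ∀ t ≥ (0:ℝ), 0 ≤ S.σ i l p t) ∧
  (∀ i, Continuous (fun q : ℝ × ℝ => S.F i q.1 q.2)) ∧
  (∀ i j l p, Continuous (fun q : ℝ × ℝ => S.h i j l p q.1 q.2)) ∧
  (∀ i j l p, Continuous (fun q : ℝ × ℝ => S.f i j l p q.1 q.2)) ∧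
  (∀ i j p, Continuous (S.g i j p)) ∧
  (∀ i l p, Continuous (S.G i l p)) ∧
  (∀ i j p, IsProbabilityMeasure (S.η i j p) ∧ S.η i j p (Set.Ioi 0) = 0) ∧
  (∀ i l p, IsProbabilityMeasure (S.ρ i l p) ∧ S.ρ i l p (Set.Ioi 0) = 0)

/-- A solution of (1) on `ℝ` with bounded initial condition at `t₀`. -/
def IsSolution (S : CGData n P) (t₀ : ℝ) (x : Fin (n+1) → ℝ → ℝ) : Prop :=
  (∀ i, Continuous (x i)) ∧
  (∃ M, ∀ i, ∀ t ≤ t₀, |x i t| ≤ M) ∧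
  (∀ i, ∀ t, t₀ < t → HasDerivAt (x i) (S.rhs x i t) t)

/-- Hypothesis (H1): boundedness of the coefficients. -/
def H1 (S : CGData n P) : Prop :=
  (∀ i j l p, ∃ M, ∀ t ≥ (0:ℝ), |S.c i j l p t| ≤ M) ∧
  (∀ i j l p, ∃ M, ∀ t ≥ (0:ℝ), |S.d i j l p t| ≤ M) ∧
  (∀ i, ∃ M, ∀ t ≥ (0:ℝ), |S.I i t| ≤ M) ∧
  (∀ i, ∀ u : ℝ, ∃ M, ∀ t ≥ (0:ℝ), |S.b i t u| ≤ M)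

/-- Hypothesis (H2). -/
def H2 (S : CGData n P) (aL aU : Fin (n+1) → ℝ) (A : Fin (n+1) → ℝ → ℝ) : Prop :=
  (∀ i, 0 < aL i) ∧ (∀ i, aL i ≤ aU i) ∧
  (∀ i, ∀ t ≥ (0:ℝ), ∀ v, aL i ≤ S.a i t v ∧ S.a i t v ≤ aU i) ∧
  (∀ i, ∀ v : ℝ, ∀ t ≥ (0:ℝ),
    ∃ da, HasDerivAt (fun s => S.a i s v) da t ∧ A i t * (S.a i t v) ^ 2 ≤ da)

/-- Hypothesis (H3). -/
def H3 (S : CGData n P) (β : Fin (n+1) → ℝ → ℝ) : Prop :=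
  (∀ i, ContinuousOn (β i) (Set.Ici 0)) ∧
  (∀ i, ∀ t ≥ (0:ℝ), 0 ≤ β i t) ∧
  (∀ i, ∀ t ≥ (0:ℝ), ∀ u v : ℝ, u ≠ v → β i t ≤ (S.b i t u - S.b i t v) / (u - v))

/-- Hypothesis (H4): unbounded delays eventually dominated by `t`. -/
def H4 (S : CGData n P) : Prop :=
  (∀ i j p, Tendsto (fun t => t - S.τ i j p t) atTop atTop) ∧
  (∀ i l p, Tendsto (fun t => t - S.σ i l p t) atTop atTop)

/-- Hypothesis (H5). -/
def H5 (S : CGData n P)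
    (γ1 γ2 μ1 μ2 : Fin (n+1) → Fin (n+1) → Fin (n+1) → Fin (P+1) → ℝ) : Prop :=
  (∀ i j l p, 0 < γ1 i j l p ∧ 0 < γ2 i j l p ∧ 0 < μ1 i j l p ∧ 0 < μ2 i j l p) ∧
  (∀ i j l p u1 u2 v1 v2,
    |S.h i j l p u1 u2 - S.h i j l p v1 v2| ≤ γ1 i j l p * |u1 - v1| + γ2 i j l p * |u2 - v2|) ∧
  (∀ i j l p u1 u2 v1 v2,
    |S.f i j l p u1 u2 - S.f i j l p v1 v2| ≤ μ1 i j l p * |u1 - v1| + μ2 i j l p * |u2 - v2|)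

/-- Hypothesis (H6). -/
def H6 (S : CGData n P) (ξ Ξ : Fin (n+1) → Fin (n+1) → Fin (P+1) → ℝ)
    (ζ ς : Fin (n+1) → ℝ) : Prop :=
  (∀ i j p, 0 < ξ i j p) ∧ (∀ i l p, 0 < Ξ i l p) ∧ (∀ i, 0 < ζ i ∧ 0 < ς i) ∧
  (∀ i j p u v, |S.g i j p u - S.g i j p v| ≤ ξ i j p * |u - v|) ∧
  (∀ i l p u v, |S.G i l p u - S.G i l p v| ≤ Ξ i l p * |u - v|) ∧
  (∀ i u1 u2 v1 v2, |S.F i u1 u2 - S.F i v1 v2| ≤ ζ i * |u1 - v1| + ς i * |u2 - v2|)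

/-- The expression whose `limsup` is required to be negative in hypothesis (H7). -/
noncomputable def H7expr (S : CGData n P) (aL aU : Fin (n+1) → ℝ) (A : Fin (n+1) → ℝ → ℝ)
    (β : Fin (n+1) → ℝ → ℝ)
    (γ1 γ2 μ1 μ2 : Fin (n+1) → Fin (n+1) → Fin (n+1) → Fin (P+1) → ℝ)
    (ξ Ξ : Fin (n+1) → Fin (n+1) → Fin (P+1) → ℝ) (ζ ς : Fin (n+1) → ℝ)
    (dv : Fin (n+1) → ℝ) (i : Fin (n+1)) (t : ℝ) : ℝ :=
  -(aL i * (β i t + A i t)) +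
    ∑ p : Fin (P+1), ∑ j : Fin (n+1), ∑ l : Fin (n+1),
      (ζ i * |S.c i j l p t| *
          (aU j * (dv j / dv i) * γ1 i j l p + aU l * (dv l / dv i) * γ2 i j l p)
        + ς i * |S.d i j l p t| *
          (aU j * (dv j / dv i) * ξ i j p * μ1 i j l p
            + aU l * (dv l / dv i) * Ξ i l p * μ2 i j l p))

/-- Hypothesis (H7). -/
def H7 (S : CGData n P) (aL aU : Fin (n+1) → ℝ) (A : Fin (n+1) → ℝ → ℝ)
    (β : Fin (n+1) → ℝ → ℝ)
    (γ1 γ2 μ1 μ2 : Fin (n+1) → Fin (n+1) → Fin (n+1) → Fin (P+1) → ℝ)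
    (ξ Ξ : Fin (n+1) → Fin (n+1) → Fin (P+1) → ℝ) (ζ ς : Fin (n+1) → ℝ)
    (dv : Fin (n+1) → ℝ) : Prop :=
  (∀ i, 0 < dv i) ∧
  (∀ i, limsup (fun t => S.H7expr aL aU A β γ1 γ2 μ1 μ2 ξ Ξ ζ ς dv i t) atTop < 0)

/-- The convergence conditions making `Sh` an asymptotic system of `S`. -/
def IsAsymptoticOf (Sh S : CGData n P) (β βh : Fin (n+1) → ℝ → ℝ) : Prop :=
  Sh.a = S.a ∧ Sh.F = S.F ∧ Sh.h = S.h ∧ Sh.f = S.f ∧ Sh.g = S.g ∧ Sh.G = S.G ∧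
  Sh.η = S.η ∧ Sh.ρ = S.ρ ∧
  Sh.H3 βh ∧
  (∀ i, Tendsto (fun t => β i t - βh i t) atTop (nhds 0)) ∧
  (∀ i, ∀ w : ℝ → ℝ, Continuous w → (∃ M, ∀ t, |w t| ≤ M) →
    Tendsto (fun t => S.b i t (w t) - Sh.b i t (w t)) atTop (nhds 0)) ∧
  (∀ i j l p, Tendsto (fun t => S.c i j l p t - Sh.c i j l p t) atTop (nhds 0)) ∧
  (∀ i j l p, Tendsto (fun t => S.d i j l p t - Sh.d i j l p t) atTop (nhds 0)) ∧
  (∀ i j p, Tendsto (fun t => S.τ i j p t - Sh.τ i j p t) atTop (nhds 0)) ∧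
  (∀ i l p, Tendsto (fun t => S.σ i l p t - Sh.σ i l p t) atTop (nhds 0)) ∧
  (∀ i, Tendsto (fun t => S.I i t - Sh.I i t) atTop (nhds 0))

/-- The error term `δ_i(t)` comparing system `S` with an asymptotic system `Sh`
along a bounded solution `x` of `S` and a bounded continuous function `y`. -/
noncomputable def delta (S Sh : CGData n P)
    (γ1 γ2 : Fin (n+1) → Fin (n+1) → Fin (n+1) → Fin (P+1) → ℝ)
    (ζ ς : Fin (n+1) → ℝ) (x y : Fin (n+1) → ℝ → ℝ) (i : Fin (n+1)) (t : ℝ) : ℝ :=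
  |Sh.b i t (y i t) - S.b i t (y i t)| + |S.I i t - Sh.I i t| +
    ∑ p : Fin (P+1), ∑ j : Fin (n+1), ∑ l : Fin (n+1),
      (ζ i * (|S.c i j l p t - Sh.c i j l p t| *
            |S.h i j l p (y j (t - Sh.τ i j p t)) (y l (t - Sh.σ i l p t))|
          + |S.c i j l p t| *
            (γ1 i j l p * |x j (t - S.τ i j p t) - x j (t - Sh.τ i j p t)|
              + γ2 i j l p * |x l (t - S.σ i l p t) - x l (t - Sh.σ i l p t)|))
        + ς i * |S.d i j l p t - Sh.d i j l p t| *
            |S.f i j l p (∫ s in Set.Iic (0:ℝ), S.g i j p (y j (t + s)) ∂(S.η i j p))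
              (∫ s in Set.Iic (0:ℝ), S.G i l p (y l (t + s)) ∂(S.ρ i l p))|)

end CGData

open CGData

section Helpers

open MeasureTheory Filter

private lemma unif_bound' {α : Type*} [Fintype α] (f : α → ℝ → ℝ)
    (h : ∀ a, ∃ M, ∀ t ≥ (0:ℝ), |f a t| ≤ M) :
    ∃ M, 0 ≤ M ∧ ∀ a, ∀ t ≥ (0:ℝ), |f a t| ≤ M := by
  choose g hg using h
  refine ⟨∑ a, |g a|, Finset.sum_nonneg fun _ _ => abs_nonneg _, fun a t ht => ?_⟩
  exact le_trans (hg a t ht) (le_trans (le_abs_self _)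
    (Finset.single_le_sum (f := fun a => |g a|) (fun _ _ => abs_nonneg _) (Finset.mem_univ a)))

private lemma lip2_bound' (h : ℝ → ℝ → ℝ) {c1 c2 M1 M2 : ℝ} (hc1 : 0 ≤ c1) (hc2 : 0 ≤ c2)
    (hlip : ∀ u1 u2 v1 v2, |h u1 u2 - h v1 v2| ≤ c1 * |u1 - v1| + c2 * |u2 - v2|)
    {u v : ℝ} (hu : |u| ≤ M1) (hv : |v| ≤ M2) :
    |h u v| ≤ |h 0 0| + c1 * M1 + c2 * M2 := by
  have h1 := hlip u v 0 0
  have h2 := abs_sub_abs_le_abs_sub (h u v) (h 0 0)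
  simp only [sub_zero] at h1
  nlinarith [mul_le_mul_of_nonneg_left hu hc1, mul_le_mul_of_nonneg_left hv hc2]

private lemma int_bound' {μ : Measure ℝ} [IsProbabilityMeasure μ] (g : ℝ → ℝ) {c Mw : ℝ}
    (hc : 0 ≤ c) (hlip : ∀ u v, |g u - g v| ≤ c * |u - v|)
    (w : ℝ → ℝ) (hw : ∀ s, |w s| ≤ Mw) :
    |∫ s in Set.Iic (0:ℝ), g (w s) ∂μ| ≤ |g 0| + c * Mw := by
  have hMw : 0 ≤ Mw := le_trans (abs_nonneg _) (hw 0)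
  have hb : ∀ s : ℝ, ‖g (w s)‖ ≤ |g 0| + c * Mw := by
    intro s
    rw [Real.norm_eq_abs]
    have h1 := hlip (w s) 0
    have h2 := abs_sub_abs_le_abs_sub (g (w s)) (g 0)
    simp only [sub_zero] at h1
    nlinarith [mul_le_mul_of_nonneg_left (hw s) hc]
  have hkey := MeasureTheory.norm_integral_le_of_norm_le_const
    (μ := μ.restrict (Set.Iic 0)) (f := fun s => g (w s)) (Filter.Eventually.of_forall hb)
  rw [Real.norm_eq_abs] at hkey
  refine le_trans hkey ?_
  have hC : 0 ≤ |g 0| + c * Mw := by positivity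
  have hle1 : ((μ.restrict (Set.Iic 0)) Set.univ).toReal ≤ 1 := by
    rw [Measure.restrict_apply_univ]
    calc (μ (Set.Iic 0)).toReal ≤ (1 : ENNReal).toReal :=
          ENNReal.toReal_mono (by simp) prob_le_one
      _ = 1 := by simp
  exact mul_le_of_le_one_right hC hle1

end Helpers


/-- Under (H1)-(H6), if `Sh` is an asymptotic system of `S`, `x` is a solution of `S`
with bounded initial condition that is bounded on `ℝ`, and `y` is any bounded continuous
function, then the error term `δ_i(t)` tends to `0` as `t → +∞`. -/
theorem delta_tendsto_zero {n P : ℕ} (S Sh : CGData n P)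
    (aL aU : Fin (n+1) → ℝ) (A : Fin (n+1) → ℝ → ℝ) (β βh : Fin (n+1) → ℝ → ℝ)
    (γ1 γ2 μ1 μ2 : Fin (n+1) → Fin (n+1) → Fin (n+1) → Fin (P+1) → ℝ)
    (ξ Ξ : Fin (n+1) → Fin (n+1) → Fin (P+1) → ℝ) (ζ ς : Fin (n+1) → ℝ)
    (hreg : S.Regular) (hregh : Sh.Regular)
    (h1 : S.H1) (h2 : S.H2 aL aU A) (h3 : S.H3 β) (h4 : S.H4)
    (h5 : S.H5 γ1 γ2 μ1 μ2) (h6 : S.H6 ξ Ξ ζ ς)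
    (hasymp : IsAsymptoticOf Sh S β βh)
    (t₀ : ℝ) (ht₀ : 0 ≤ t₀)
    (x : Fin (n+1) → ℝ → ℝ) (hx : S.IsSolution t₀ x)
    (hxbd : ∃ M, ∀ i, ∀ t : ℝ, |x i t| ≤ M)
    (y : Fin (n+1) → ℝ → ℝ) (hyc : ∀ i, Continuous (y i))
    (hybd : ∃ M, ∀ i, ∀ t : ℝ, |y i t| ≤ M) :
    ∀ i, Tendsto (fun t => delta S Sh γ1 γ2 ζ ς x y i t) atTop (nhds 0) := by
  obtain ⟨haeq, hFeq, hheq, hfeq, hgeq, hGeq, hηeq, hρeq, hh3h, hβconv, hbconv, hcconv,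
    hdconv, hτconv, hσconv, hIconv⟩ := hasymp
  obtain ⟨Mx, hMx⟩ := hxbd
  obtain ⟨My, hMy⟩ := hybd
  obtain ⟨hxc, hxinit, hxode⟩ := hx
  obtain ⟨-, -, -, -, -, -, -, -, -, -, -, -, -, -, -, hη, hρ⟩ := hreg
  intro i
  have hMx0 : 0 ≤ Mx := le_trans (abs_nonneg _) (hMx i 0)
  have hMy0 : 0 ≤ My := le_trans (abs_nonneg _) (hMy i 0)
  -- uniform bounds on coefficients
  obtain ⟨Mc, hMc0, hMc⟩ := unif_bound'
    (fun q : Fin (n+1) × Fin (n+1) × Fin (n+1) × Fin (P+1) =>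
      fun t => S.c q.1 q.2.1 q.2.2.1 q.2.2.2 t) (fun q => h1.1 q.1 q.2.1 q.2.2.1 q.2.2.2)
  obtain ⟨Md, hMd0, hMd⟩ := unif_bound'
    (fun q : Fin (n+1) × Fin (n+1) × Fin (n+1) × Fin (P+1) =>
      fun t => S.d q.1 q.2.1 q.2.2.1 q.2.2.2 t) (fun q => h1.2.1 q.1 q.2.1 q.2.2.1 q.2.2.2)
  obtain ⟨MI, hMI0, hMI⟩ := unif_bound' (fun k : Fin (n+1) => fun t => S.I k t) h1.2.2.1
  obtain ⟨Mb, hMb0, hMb⟩ := unif_bound'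
    (fun q : Fin (n+1) × Bool => fun t => S.b q.1 t (if q.2 then Mx else -Mx))
    (fun q => by rcases q with ⟨k, (_|_)⟩
                 · simpa using h1.2.2.2 k (-Mx)
                 · simpa using h1.2.2.2 k Mx)
  -- monotonicity of b in the second variable
  have hbmono : ∀ k, ∀ t ≥ (0:ℝ), ∀ u v : ℝ, v ≤ u → S.b k t v ≤ S.b k t u := by
    intro k t ht u v huv
    rcases eq_or_lt_of_le huv with rfl | hlt
    · exact le_rfl
    · have h3' := h3.2.2 k t ht u v (ne_of_gt hlt)
      have hβ := h3.2.1 k t ht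
      have hnn : 0 ≤ (S.b k t u - S.b k t v) / (u - v) := le_trans hβ h3'
      have hpos : (0:ℝ) < u - v := sub_pos.2 hlt
      have := mul_nonneg hnn hpos.le
      rw [div_mul_cancel₀ _ hpos.ne'] at this
      linarith
  have hbbd : ∀ k, ∀ t ≥ (0:ℝ), |S.b k t (x k t)| ≤ Mb := by
    intro k t ht
    have hT := hMb (k, true) t ht
    have hF := hMb (k, false) t ht
    simp only [if_true, if_false, Bool.false_eq_true] at hT hF
    have hu := hbmono k t ht Mx (x k t) (le_of_abs_le (hMx k t))
    have hl := hbmono k t ht (x k t) (-Mx) (neg_le_of_abs_le (hMx k t))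
    rw [abs_le] at hT hF ⊢
    constructor <;> linarith [hT.1, hT.2, hF.1, hF.2]
  -- bound on U
  have hU : ∀ k, ∃ CU, 0 ≤ CU ∧ ∀ t ≥ (0:ℝ), |S.U x k t| ≤ CU := by
    intro k
    refine ⟨∑ p : Fin (P+1), ∑ j : Fin (n+1), ∑ l : Fin (n+1),
      Mc * (|S.h k j l p 0 0| + γ1 k j l p * Mx + γ2 k j l p * Mx), ?_, ?_⟩
    · refine Finset.sum_nonneg fun p _ => Finset.sum_nonneg fun j _ =>
        Finset.sum_nonneg fun l _ => mul_nonneg hMc0 ?_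
      exact add_nonneg (add_nonneg (abs_nonneg _)
        (mul_nonneg (h5.1 k j l p).1.le hMx0)) (mul_nonneg (h5.1 k j l p).2.1.le hMx0)
    · intro t ht
      refine le_trans (Finset.abs_sum_le_sum_abs _ _) (Finset.sum_le_sum fun p _ => ?_)
      refine le_trans (Finset.abs_sum_le_sum_abs _ _) (Finset.sum_le_sum fun j _ => ?_)
      refine le_trans (Finset.abs_sum_le_sum_abs _ _) (Finset.sum_le_sum fun l _ => ?_)
      rw [abs_mul]
      exact mul_le_mul (hMc (k, j, l, p) t ht)
        (lip2_bound' _ (h5.1 k j l p).1.le (h5.1 k j l p).2.1.le (h5.2.1 k j l p)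
          (hMx j _) (hMx l _)) (abs_nonneg _) hMc0
  -- bound on V
  have hV : ∀ k, ∃ CV, 0 ≤ CV ∧ ∀ t ≥ (0:ℝ), |S.V x k t| ≤ CV := by
    intro k
    refine ⟨∑ p : Fin (P+1), ∑ j : Fin (n+1), ∑ l : Fin (n+1),
      Md * (|S.f k j l p 0 0| + μ1 k j l p * (|S.g k j p 0| + ξ k j p * Mx)
        + μ2 k j l p * (|S.G k l p 0| + Ξ k l p * Mx)), ?_, ?_⟩
    · refine Finset.sum_nonneg fun p _ => Finset.sum_nonneg fun j _ =>
        Finset.sum_nonneg fun l _ => mul_nonneg hMd0 ?_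
      refine add_nonneg (add_nonneg (abs_nonneg _) (mul_nonneg (h5.1 k j l p).2.2.1.le
        (add_nonneg (abs_nonneg _) (mul_nonneg (h6.1 k j p).le hMx0))))
        (mul_nonneg (h5.1 k j l p).2.2.2.le
          (add_nonneg (abs_nonneg _) (mul_nonneg (h6.2.1 k l p).le hMx0)))
    · intro t ht
      refine le_trans (Finset.abs_sum_le_sum_abs _ _) (Finset.sum_le_sum fun p _ => ?_)
      refine le_trans (Finset.abs_sum_le_sum_abs _ _) (Finset.sum_le_sum fun j _ => ?_)
      refine le_trans (Finset.abs_sum_le_sum_abs _ _) (Finset.sum_le_sum fun l _ => ?_)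
      rw [abs_mul]
      haveI := (hη k j p).1
      haveI := (hρ k l p).1
      refine mul_le_mul (hMd (k, j, l, p) t ht)
        (lip2_bound' _ (h5.1 k j l p).2.2.1.le (h5.1 k j l p).2.2.2.le (h5.2.2 k j l p)
          ?_ ?_) (abs_nonneg _) hMd0
      · exact int_bound' _ (h6.1 k j p).le (h6.2.2.2.1 k j p) _ (fun s => hMx j (t + s))
      · exact int_bound' _ (h6.2.1 k l p).le (h6.2.2.2.2.1 k l p) _ (fun s => hMx l (t + s))
  choose CU hCU0 hCU using hU
  choose CV hCV0 hCV using hV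
  -- bound on the right-hand side
  have hrhs : ∀ k, ∃ Lk, 0 ≤ Lk ∧ ∀ t ≥ (0:ℝ), |S.rhs x k t| ≤ Lk := by
    intro k
    refine ⟨aU k * (Mb + (|S.F k 0 0| + ζ k * CU k + ς k * CV k) + MI), ?_, ?_⟩
    · refine mul_nonneg (le_trans (h2.1 k).le (h2.2.1 k)) ?_
      refine add_nonneg (add_nonneg hMb0 (add_nonneg (add_nonneg (abs_nonneg _)
        (mul_nonneg (h6.2.2.1 k).1.le (hCU0 k)))
        (mul_nonneg (h6.2.2.1 k).2.le (hCV0 k)))) hMI0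
    · intro t ht
      rw [CGData.rhs, abs_mul]
      have ha' := h2.2.2.1 k t ht (x k t)
      have ha : |S.a k t (x k t)| ≤ aU k := by
        rw [abs_of_pos (lt_of_lt_of_le (h2.1 k) ha'.1)]; exact ha'.2
      have hFb : |S.F k (S.U x k t) (S.V x k t)| ≤ |S.F k 0 0| + ζ k * CU k + ς k * CV k :=
        lip2_bound' _ (h6.2.2.1 k).1.le (h6.2.2.1 k).2.le (h6.2.2.2.2.2 k)
          (hCU k t ht) (hCV k t ht)
      have hIb := hMI k t ht
      have hbB := hbbd k t ht
      have habs : |-(S.b k t (x k t)) + S.F k (S.U x k t) (S.V x k t) + S.I k t|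
          ≤ Mb + (|S.F k 0 0| + ζ k * CU k + ς k * CV k) + MI := by
        calc |-(S.b k t (x k t)) + S.F k (S.U x k t) (S.V x k t) + S.I k t|
            ≤ |-(S.b k t (x k t)) + S.F k (S.U x k t) (S.V x k t)| + |S.I k t| := abs_add_le _ _
          _ ≤ |-(S.b k t (x k t))| + |S.F k (S.U x k t) (S.V x k t)| + |S.I k t| := by
              have := abs_add_le (-(S.b k t (x k t))) (S.F k (S.U x k t) (S.V x k t)); linarith
          _ ≤ Mb + (|S.F k 0 0| + ζ k * CU k + ς k * CV k) + MI := by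
              rw [abs_neg]; gcongr
      exact mul_le_mul ha habs (abs_nonneg _) (le_trans (abs_nonneg _) ha)
  choose L hL0 hL using hrhs
  -- Lipschitz estimate on [t₀+1, ∞)
  have hlipx : ∀ k, ∀ s ≥ t₀ + 1, ∀ r ≥ t₀ + 1, |x k s - x k r| ≤ L k * |s - r| := by
    intro k s hs r hr
    have key := Convex.norm_image_sub_le_of_norm_hasDerivWithin_le
      (f := x k) (f' := fun t => S.rhs x k t) (s := Set.Ici (t₀ + 1))
      (fun t ht => (hxode k t (by have := Set.mem_Ici.mp ht; linarith)).hasDerivWithinAt)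
      (fun t ht => by
        rw [Real.norm_eq_abs]
        exact hL k t (by have := Set.mem_Ici.mp ht; linarith))
      (convex_Ici _) (Set.mem_Ici.mpr hr) (Set.mem_Ici.mpr hs)
    simpa [Real.norm_eq_abs] using key
  -- delay-difference terms tend to zero
  have hD : ∀ (j : Fin (n+1)) (τS τh : ℝ → ℝ),
      Tendsto (fun t => t - τS t) atTop atTop →
      Tendsto (fun t => τS t - τh t) atTop (nhds 0) →
      Tendsto (fun t => |x j (t - τS t) - x j (t - τh t)|) atTop (nhds 0) := by
    intro j τS τh hτS hτdiff
    have hτh : Tendsto (fun t => t - τh t) atTop atTop := by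
      have heq : (fun t => t - τh t) = fun t => (t - τS t) + (τS t - τh t) := by
        funext t; ring
      rw [heq]
      exact tendsto_atTop_add_right_of_le' _ (-1) hτS
        (hτdiff.eventually (eventually_ge_nhds (by norm_num : (-1:ℝ) < 0)))
    have hev : ∀ᶠ t in atTop, |x j (t - τS t) - x j (t - τh t)| ≤ L j * |τS t - τh t| := by
      filter_upwards [hτS.eventually_ge_atTop (t₀ + 1), hτh.eventually_ge_atTop (t₀ + 1)]
        with t h1 h2
      refine le_trans (hlipx j (t - τS t) h1 (t - τh t) h2) (le_of_eq ?_)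
      congr 1
      have heq : (t - τS t) - (t - τh t) = -(τS t - τh t) := by ring
      rw [heq, abs_neg]
    refine squeeze_zero' (Eventually.of_forall fun t => abs_nonneg _) hev ?_
    simpa using hτdiff.abs.const_mul (L j)
  -- first two summands of delta
  have hb1 : Tendsto (fun t => |Sh.b i t (y i t) - S.b i t (y i t)|) atTop (nhds 0) := by
    have h' := (hbconv i (y i) (hyc i) ⟨My, fun t => hMy i t⟩).abs
    have heq : (fun t => |Sh.b i t (y i t) - S.b i t (y i t)|)
        = fun t => |S.b i t (y i t) - Sh.b i t (y i t)| := funext fun t => abs_sub_comm _ _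
    rw [heq]
    simpa using h'
  have hI1 : Tendsto (fun t => |S.I i t - Sh.I i t|) atTop (nhds 0) := by
    simpa using (hIconv i).abs
  -- the triple sum tends to zero
  have hsum : Tendsto (fun t => ∑ p : Fin (P+1), ∑ j : Fin (n+1), ∑ l : Fin (n+1),
      (ζ i * (|S.c i j l p t - Sh.c i j l p t| *
            |S.h i j l p (y j (t - Sh.τ i j p t)) (y l (t - Sh.σ i l p t))|
          + |S.c i j l p t| *
            (γ1 i j l p * |x j (t - S.τ i j p t) - x j (t - Sh.τ i j p t)|
              + γ2 i j l p * |x l (t - S.σ i l p t) - x l (t - Sh.σ i l p t)|))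
        + ς i * |S.d i j l p t - Sh.d i j l p t| *
            |S.f i j l p (∫ s in Set.Iic (0:ℝ), S.g i j p (y j (t + s)) ∂(S.η i j p))
              (∫ s in Set.Iic (0:ℝ), S.G i l p (y l (t + s)) ∂(S.ρ i l p))|))
      atTop (nhds 0) := by
    have hmain : ∀ (p : Fin (P+1)) (j l : Fin (n+1)), Tendsto (fun t =>
        (ζ i * (|S.c i j l p t - Sh.c i j l p t| *
              |S.h i j l p (y j (t - Sh.τ i j p t)) (y l (t - Sh.σ i l p t))|
            + |S.c i j l p t| *
              (γ1 i j l p * |x j (t - S.τ i j p t) - x j (t - Sh.τ i j p t)|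
                + γ2 i j l p * |x l (t - S.σ i l p t) - x l (t - Sh.σ i l p t)|))
          + ς i * |S.d i j l p t - Sh.d i j l p t| *
              |S.f i j l p (∫ s in Set.Iic (0:ℝ), S.g i j p (y j (t + s)) ∂(S.η i j p))
                (∫ s in Set.Iic (0:ℝ), S.G i l p (y l (t + s)) ∂(S.ρ i l p))|))
        atTop (nhds 0) := by
      intro p j l
      -- T1
      have hT1 : Tendsto (fun t => |S.c i j l p t - Sh.c i j l p t| *
          |S.h i j l p (y j (t - Sh.τ i j p t)) (y l (t - Sh.σ i l p t))|) atTop (nhds 0) := by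
        refine squeeze_zero (g := fun t => |S.c i j l p t - Sh.c i j l p t| *
            (|S.h i j l p 0 0| + γ1 i j l p * My + γ2 i j l p * My))
          (fun t => mul_nonneg (abs_nonneg _) (abs_nonneg _)) (fun t => ?_) ?_
        · exact mul_le_mul_of_nonneg_left
            (lip2_bound' _ (h5.1 i j l p).1.le (h5.1 i j l p).2.1.le (h5.2.1 i j l p)
              (hMy j _) (hMy l _)) (abs_nonneg _)
        · simpa using (hcconv i j l p).abs.mul_const
            (|S.h i j l p 0 0| + γ1 i j l p * My + γ2 i j l p * My)
      -- T2
      have hj := hD j (S.τ i j p) (Sh.τ i j p) (h4.1 i j p) (hτconv i j p)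
      have hl := hD l (S.σ i l p) (Sh.σ i l p) (h4.2 i l p) (hσconv i l p)
      have hT2 : Tendsto (fun t => |S.c i j l p t| *
          (γ1 i j l p * |x j (t - S.τ i j p t) - x j (t - Sh.τ i j p t)|
            + γ2 i j l p * |x l (t - S.σ i l p t) - x l (t - Sh.σ i l p t)|))
          atTop (nhds 0) := by
        have hinn : ∀ t, 0 ≤ γ1 i j l p * |x j (t - S.τ i j p t) - x j (t - Sh.τ i j p t)|
            + γ2 i j l p * |x l (t - S.σ i l p t) - x l (t - Sh.σ i l p t)| := fun t =>
          add_nonneg (mul_nonneg (h5.1 i j l p).1.le (abs_nonneg _))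
            (mul_nonneg (h5.1 i j l p).2.1.le (abs_nonneg _))
        refine squeeze_zero' (g := fun t => Mc *
            (γ1 i j l p * |x j (t - S.τ i j p t) - x j (t - Sh.τ i j p t)|
              + γ2 i j l p * |x l (t - S.σ i l p t) - x l (t - Sh.σ i l p t)|))
          (Eventually.of_forall fun t => mul_nonneg (abs_nonneg _) (hinn t)) ?_ ?_
        · filter_upwards [eventually_ge_atTop (0:ℝ)] with t ht
          exact mul_le_mul_of_nonneg_right (hMc (i, j, l, p) t ht) (hinn t)
        · simpa using
            (((hj.const_mul (γ1 i j l p)).add (hl.const_mul (γ2 i j l p))).const_mul Mc)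
      -- T3
      have hT3 : Tendsto (fun t => ς i * |S.d i j l p t - Sh.d i j l p t| *
          |S.f i j l p (∫ s in Set.Iic (0:ℝ), S.g i j p (y j (t + s)) ∂(S.η i j p))
            (∫ s in Set.Iic (0:ℝ), S.G i l p (y l (t + s)) ∂(S.ρ i l p))|)
          atTop (nhds 0) := by
        haveI := (hη i j p).1
        haveI := (hρ i l p).1
        refine squeeze_zero (g := fun t => ς i * |S.d i j l p t - Sh.d i j l p t| *
            (|S.f i j l p 0 0|
              + μ1 i j l p * (|S.g i j p 0| + ξ i j p * My)
              + μ2 i j l p * (|S.G i l p 0| + Ξ i l p * My)))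
          (fun t => mul_nonneg (mul_nonneg (h6.2.2.1 i).2.le
          (abs_nonneg _)) (abs_nonneg _)) (fun t => ?_) ?_
        · refine mul_le_mul_of_nonneg_left
            (lip2_bound' _ (h5.1 i j l p).2.2.1.le (h5.1 i j l p).2.2.2.le
              (h5.2.2 i j l p)
              (int_bound' _ (h6.1 i j p).le (h6.2.2.2.1 i j p) _ (fun s => hMy j (t + s)))
              (int_bound' _ (h6.2.1 i l p).le (h6.2.2.2.2.1 i l p) _
                (fun s => hMy l (t + s))))
            (mul_nonneg (h6.2.2.1 i).2.le (abs_nonneg _))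
        · simpa using ((hdconv i j l p).abs.const_mul (ς i)).mul_const
            (|S.f i j l p 0 0|
              + μ1 i j l p * (|S.g i j p 0| + ξ i j p * My)
              + μ2 i j l p * (|S.G i l p 0| + Ξ i l p * My))
      simpa using ((hT1.add hT2).const_mul (ζ i)).add hT3
    have h0 : Tendsto (fun t => ∑ p : Fin (P+1), ∑ j : Fin (n+1), ∑ l : Fin (n+1), _)
        atTop (nhds (∑ _p : Fin (P+1), ∑ _j : Fin (n+1), ∑ _l : Fin (n+1), (0:ℝ))) :=
      tendsto_finset_sum _ fun p _ => tendsto_finset_sum _ fun j _ =>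
        tendsto_finset_sum _ fun l _ => hmain p j l
    simpa using h0
  have hfinal := (hb1.add hI1).add hsum
  simp only [add_zero] at hfinal
  simpa [CGData.delta] using hfinal
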